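/- Let G be a comparability graph with modular partition P = {M₁, …, M_k}. Then R^p(G) = max{R^p(G/P), R^p(G[M₁]), …, R^p(G[M_k])}. -/

import Mathlib

section Defs

variable {V : Type*}

/-- Two letters alternate in a word: the subword over `{a,b}` has no equal consecutive letters. -/
def Alternates [DecidableEq V] (w : List V) (a b : V) : Prop :=
  (w.filter (fun x => decide (x = a ∨ x = b))).Chain' (· ≠ ·)

/-- A word over the vertex set represents a graph: every vertex occurs, and two distinct
vertices are adjacent iff they alternate in the word. -/
def Represents [DecidableEq V] (w : List V) (G : SimpleGraph V) : Prop :=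
  (∀ v : V, v ∈ w) ∧ ∀ a b : V, a ≠ b → (G.Adj a b ↔ Alternates w a b)

def WordRepresentable [DecidableEq V] (G : SimpleGraph V) : Prop :=
  ∃ w : List V, Represents w G

/-- Every letter occurs exactly `k` times. -/
def IsKUniform [DecidableEq V] (w : List V) (k : ℕ) : Prop :=
  ∀ v : V, w.count v = k

/-- `k` is the representation number of `G`. -/
def RepNumIs [DecidableEq V] (G : SimpleGraph V) (k : ℕ) : Prop :=
  IsLeast {n : ℕ | ∃ w : List V, IsKUniform w n ∧ Represents w G} k

/-- `p` is a permutation of the vertex set (as a list). -/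
def IsPermOn (p : List V) : Prop := p.Nodup ∧ ∀ v : V, v ∈ p

/-- `G` is representable by a concatenation of `k` permutations of its vertex set. -/
def PermRepresents [DecidableEq V] (G : SimpleGraph V) (k : ℕ) : Prop :=
  ∃ ps : List (List V), ps.length = k ∧ (∀ p ∈ ps, IsPermOn p) ∧ Represents ps.flatten G

/-- `k` is the permutation-representation number of `G`. -/
def PrnIs [DecidableEq V] (G : SimpleGraph V) (k : ℕ) : Prop :=
  IsLeast {n : ℕ | PermRepresents G n} k

/-- A comparability graph: a graph admitting a transitive orientation of its edges. -/
def IsComparability (G : SimpleGraph V) : Prop :=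
  ∃ lt : V → V → Prop, Transitive lt ∧ (∀ a b, lt a b → G.Adj a b) ∧
    (∀ a b, G.Adj a b → (lt a b ↔ ¬ lt b a))

/-- A module: every outside vertex is adjacent to all of `M` or to none of `M`. -/
def IsModule (G : SimpleGraph V) (M : Set V) : Prop :=
  ∀ x ∉ M, (∀ m ∈ M, G.Adj x m) ∨ (∀ m ∈ M, ¬ G.Adj x m)

end Defs

/-- The graph obtained from `G` by replacing the vertex `a` with the module `M`. -/
def substGraph {W V' : Type*} (G : SimpleGraph W) (a : W) (M : SimpleGraph V') :
    SimpleGraph ({x : W // x ≠ a} ⊕ V') where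
  Adj x y :=
    match x, y with
    | Sum.inl u, Sum.inl v => G.Adj u.1 v.1
    | Sum.inl u, Sum.inr _ => G.Adj u.1 a
    | Sum.inr _, Sum.inl v => G.Adj a v.1
    | Sum.inr u, Sum.inr v => M.Adj u v
  symm := by
    refine ⟨?_⟩
    rintro (u | u) (v | v) h
    · exact h.symm
    · exact h.symm
    · exact h.symm
    · exact h.symm
  loopless := by
    refine ⟨?_⟩
    rintro (u | u) h
    · exact G.irrefl h
    · exact M.irrefl h

/-- The quotient graph of a modular partition: parts are adjacent iff completely adjacent. -/
def quotientGraph {V : Type*} (G : SimpleGraph V) {n : ℕ} (Mod : Fin n → Set V) :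
    SimpleGraph (Fin n) where
  Adj i j := i ≠ j ∧ ∀ a ∈ Mod i, ∀ b ∈ Mod j, G.Adj a b
  symm := by
    refine ⟨?_⟩
    rintro i j ⟨hij, h⟩
    exact ⟨hij.symm, fun a ha b hb => (h b hb a ha).symm⟩
  loopless := by refine ⟨?_⟩; rintro i ⟨h, _⟩; exact h rfl

/-- The lexicographical product of two graphs. -/
def lexProd {V V' : Type*} (G : SimpleGraph V) (G' : SimpleGraph V') :
    SimpleGraph (V × V') where
  Adj x y := G.Adj x.1 y.1 ∨ (x.1 = y.1 ∧ G'.Adj x.2 y.2)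
  symm := by
    refine ⟨?_⟩
    rintro ⟨a, a'⟩ ⟨b, b'⟩ (h | ⟨h1, h2⟩)
    · exact Or.inl h.symm
    · exact Or.inr ⟨h1.symm, h2.symm⟩
  loopless := by
    refine ⟨?_⟩
    rintro ⟨a, a'⟩ (h | ⟨_, h⟩)
    · exact G.irrefl h
    · exact G'.irrefl h


/-!
For a concatenation of permutations, two letters alternate iff every permutation lists them in
the same order. Given `N` permutations of the quotient and `N` permutations of each part (any
representation can be padded by repeating a permutation), substituting in the `t`-th quotient
permutation each part by its `t`-th permutation gives `N` permutations of `V`: pairs inside a part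
are ordered as in that part, pairs across parts as their parts in the quotient. Conversely,
restricting a representation of `G` to one part, or to one representative per part, represents
`G[Mᵢ]`, respectively `G/P`.
-/

namespace List

theorem mem_filterMap_partialInv {α β : Type*} {e : β → α} (he : e.Injective) {l : List α}
    {x : β} : x ∈ l.filterMap (Function.partialInv e) ↔ e x ∈ l := by
  simp [mem_filterMap, he.isPartialInv x]

theorem flatMap_eq_flatMap_filter {α β : Type*} {l : List α} {g : α → List β} {p : α → Bool}
    (hg : ∀ a ∈ l, p a = false → g a = []) : l.flatMap g = (l.filter p).flatMap g := by
  induction l with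
  | nil => rfl
  | cons a l ih => by_cases h : p a <;> simp_all

theorem isChain_ne_flatten_iff {α : Type*} {a b : α} (hab : a ≠ b) :
    ∀ {L : List (List α)}, (∀ l ∈ L, l = [a, b] ∨ l = [b, a]) →
      (L.flatten.IsChain (· ≠ ·) ↔ L.IsChain (· = ·))
  | [], _ => by simp
  | [l], hL => by
    rcases hL l (by simp) with rfl | rfl <;> simp [isChain_cons_cons, hab, hab.symm]
  | l :: l' :: L, hL => by
    have ih := isChain_ne_flatten_iff hab (L := l' :: L) fun m hm => hL m (by simp [hm])
    have hba := hab.symm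
    rcases hL l (by simp) with rfl | rfl <;> rcases hL l' (by simp) with rfl | rfl <;>
      simp_all [isChain_cons_cons]

theorem isChain_eq_iff_forall_eq {α : Type*} {l : List α} :
    l.IsChain (· = ·) ↔ ∀ a ∈ l, ∀ b ∈ l, a = b := by
  rw [isChain_iff_pairwise]
  refine ⟨fun h a ha b hb => ?_, pairwise_of_forall_mem_list⟩
  by_cases hab : a = b
  exacts [hab, h.forall ha hb hab]

end List

theorem IsPermOn.mem_map_subtypeVal {V : Type*} {s : Set V} {w : List s} (hw : IsPermOn w)
    {v : V} : v ∈ w.map Subtype.val ↔ v ∈ s :=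
  ⟨fun hv => by obtain ⟨u, -, rfl⟩ := List.mem_map.1 hv; exact u.2,
    fun hv => List.mem_map.2 ⟨⟨v, hv⟩, hw.2 _, rfl⟩⟩

section PermRepresentation

variable {V W : Type*} [DecidableEq V] [DecidableEq W]

/-- `Alternates w a b` is the statement that `w.filter (onPair a b)` has no equal neighbours. -/
def onPair (a b : V) (x : V) : Bool := decide (x = a ∨ x = b)

theorem List.Nodup.filter_onPair_eq_singleton {l : List V} (hl : l.Nodup) {x y : V}
    (hx : x ∈ l) (hy : y ∈ l → y = x) : l.filter (onPair x y) = [x] := by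
  rw [← List.perm_singleton, List.perm_ext_iff_of_nodup (hl.filter _) (List.nodup_singleton x)]
  intro z
  simp only [List.mem_filter, onPair, decide_eq_true_eq, List.mem_singleton]
  constructor
  · rintro ⟨hz, rfl | rfl⟩
    exacts [rfl, hy hz]
  · rintro rfl
    exact ⟨hx, Or.inl rfl⟩

theorem onPair_comm (a b : V) : onPair a b = onPair b a := by
  funext x
  simp [onPair, or_comm]

theorem IsPermOn.filter_onPair {p : List V} (hp : IsPermOn p) {a b : V} (hab : a ≠ b) :
    p.filter (onPair a b) = [a, b] ∨ p.filter (onPair a b) = [b, a] := by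
  rw [← List.perm_pair, List.perm_ext_iff_of_nodup (hp.1.filter _) (by simp [hab])]
  intro x
  simp [onPair, hp.2]

theorem alternates_flatten_iff {ps : List (List V)} (hps : ∀ p ∈ ps, IsPermOn p) {a b : V}
    (hab : a ≠ b) : Alternates ps.flatten a b ↔
      ∀ p ∈ ps, ∀ q ∈ ps, p.filter (onPair a b) = q.filter (onPair a b) := by
  unfold Alternates
  rw [List.Chain', List.filter_flatten, List.isChain_ne_flatten_iff hab,
    List.isChain_eq_iff_forall_eq]
  · simp only [List.forall_mem_map]; rfl
  · simp only [List.forall_mem_map]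
    exact fun p hp => (hps p hp).filter_onPair hab

def IsPermRepresentation (G : SimpleGraph V) {k : ℕ} (P : Fin k → List V) : Prop :=
  (∀ t, IsPermOn (P t)) ∧ (∀ v, ∃ t, v ∈ P t) ∧
    ∀ a b, a ≠ b → (G.Adj a b ↔ ∀ s t, (P s).filter (onPair a b) = (P t).filter (onPair a b))

theorem permRepresents_iff {G : SimpleGraph V} {k : ℕ} :
    PermRepresents G k ↔ ∃ P : Fin k → List V, IsPermRepresentation G P := by
  have key : ∀ P : Fin k → List V, (∀ t, IsPermOn (P t)) →
      (Represents (List.ofFn P).flatten G ↔ IsPermRepresentation G P) := fun P hP => by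
    simp only [IsPermRepresentation, hP, implies_true, true_and]
    refine and_congr (by simp [List.mem_flatten])
      (forall₂_congr fun a b => forall_congr' fun hab => ?_)
    rw [alternates_flatten_iff (List.forall_mem_ofFn_iff.2 hP) hab]
    simp only [List.forall_mem_ofFn_iff]
  constructor
  · rintro ⟨ps, rfl, hps, hrep⟩
    have hP : ∀ t, IsPermOn (ps.get t) := fun t => hps _ (List.get_mem ps t)
    exact ⟨ps.get, (key _ hP).1 (by rwa [List.ofFn_get])⟩
  · rintro ⟨P, hP⟩
    exact ⟨List.ofFn P, List.length_ofFn, List.forall_mem_ofFn_iff.2 hP.1, (key P hP.1).2 hP⟩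

theorem IsPermRepresentation.comp_surjective {G : SimpleGraph V} {k m : ℕ} {P : Fin k → List V}
    (hP : IsPermRepresentation G P) {σ : Fin m → Fin k} (hσ : σ.Surjective) :
    IsPermRepresentation G (P ∘ σ) := by
  refine ⟨fun t => hP.1 (σ t), fun v => ?_, fun a b hab => ?_⟩
  · obtain ⟨t, ht⟩ := hP.2.1 v
    obtain ⟨s, rfl⟩ := hσ t
    exact ⟨s, ht⟩
  · rw [hP.2.2 a b hab, hσ.forall₂]
    rfl

theorem PermRepresents.mono {G : SimpleGraph V} {k m : ℕ} (h : PermRepresents G k)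
    (hkm : k ≤ m) : PermRepresents G m := by
  obtain ⟨P, hP⟩ := permRepresents_iff.1 h
  rcases Nat.eq_zero_or_pos k with rfl | hk
  · have : IsEmpty V := ⟨fun v => (hP.2.1 v).elim fun t _ => t.elim0⟩
    exact permRepresents_iff.2
      ⟨fun _ => [], fun _ => ⟨List.nodup_nil, isEmptyElim⟩, isEmptyElim, isEmptyElim⟩
  · let σ : Fin m → Fin k := fun t => ⟨min t (k - 1), by omega⟩
    have hσ : σ.Surjective := fun s => ⟨Fin.castLE hkm s, Fin.ext (by simp [σ]; omega)⟩
    exact permRepresents_iff.2 ⟨P ∘ σ, hP.comp_surjective hσ⟩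

theorem map_filter_onPair_filterMap_partialInv {e : W → V} (he : e.Injective) (x y : W)
    (l : List V) :
    ((l.filterMap (Function.partialInv e)).filter (onPair x y)).map e =
      l.filter (onPair (e x) (e y)) := by
  induction l with
  | nil => rfl
  | cons v l ih =>
    by_cases hv : ∃ w, e w = v
    · obtain ⟨w, rfl⟩ := hv
      by_cases hw : w = x ∨ w = y <;>
        simp_all [Function.partialInv_left he, onPair, he.eq_iff]
    · have hnone : Function.partialInv e v = none := by
        simp [Function.partialInv, hv]
      have hvxy : onPair (e x) (e y) v = false := by
        simp only [onPair, decide_eq_false_iff_not]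
        rintro (rfl | rfl) <;> exact hv ⟨_, rfl⟩
      simp [hnone, hvxy, ih]

theorem IsPermRepresentation.comap {G : SimpleGraph V} {H : SimpleGraph W} (e : H ↪g G) {k : ℕ}
    {P : Fin k → List V} (hP : IsPermRepresentation G P) :
    IsPermRepresentation H fun t => (P t).filterMap (Function.partialInv e) := by
  have he := e.injective
  refine ⟨fun t => ⟨(hP.1 t).1.filterMap fun a a' b hb hb' => ?_, fun x => ?_⟩, fun x => ?_,
    fun x y hxy => ?_⟩
  · rw [← (he.isPartialInv b a).1 hb, ← (he.isPartialInv b a').1 hb']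
  · exact (List.mem_filterMap_partialInv he).2 ((hP.1 t).2 (e x))
  · simpa only [List.mem_filterMap_partialInv he] using hP.2.1 (e x)
  · rw [← e.map_adj_iff, hP.2.2 _ _ (he.ne hxy)]
    simp only [← map_filter_onPair_filterMap_partialInv he, (List.map_injective_iff.2 he).eq_iff]

theorem PermRepresents.comap {G : SimpleGraph V} {H : SimpleGraph W} (e : H ↪g G) {k : ℕ}
    (h : PermRepresents G k) : PermRepresents H k :=
  let ⟨_, hP⟩ := permRepresents_iff.1 h
  permRepresents_iff.2 ⟨_, hP.comap e⟩

end PermRepresentation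

section Substitution
variable {V ι : Type*}

def substFibers (f : V → ι) (q : List ι) (w : ∀ i, List (f ⁻¹' {i})) : List V :=
  q.flatMap fun i => (w i).map Subtype.val

variable {f : V → ι} {q : List ι} {w : ∀ i, List (f ⁻¹' {i})}

theorem IsPermOn.substFibers (hq : IsPermOn q) (hw : ∀ i, IsPermOn (w i)) :
    IsPermOn (substFibers f q w) := by
  refine ⟨List.nodup_flatMap.2 ⟨fun i _ => (hw i).1.map Subtype.val_injective, ?_⟩, fun v => ?_⟩
  · refine hq.1.imp fun {i j} hij v hvi hvj => hij ?_
    rw [← (hw i).mem_map_subtypeVal.1 hvi, ← (hw j).mem_map_subtypeVal.1 hvj]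
  · exact List.mem_flatMap.2 ⟨f v, hq.2 _, (hw _).mem_map_subtypeVal.2 rfl⟩

variable [DecidableEq V] [DecidableEq ι]

/-- Only the blocks of `f x` and `f y` contain `x` or `y`. -/
theorem filter_onPair_substFibers (x y : V) :
    (substFibers f q w).filter (onPair x y) =
      (q.filter (onPair (f x) (f y))).flatMap fun i =>
        ((w i).map Subtype.val).filter (onPair x y) := by
  rw [substFibers, List.filter_flatMap]
  refine List.flatMap_eq_flatMap_filter fun i _ hi => List.filter_eq_nil_iff.2 fun v hv hvxy => ?_
  obtain ⟨⟨u, rfl⟩, -, rfl⟩ := List.mem_map.1 hv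
  simp only [onPair, decide_eq_true_eq, decide_eq_false_iff_not] at hvxy hi
  rcases hvxy with rfl | rfl <;> simp at hi

theorem filter_onPair_substFibers_of_eq (hq : IsPermOn q) {i : ι} {x y : V} (hx : f x = i)
    (hy : f y = i) :
    (substFibers f q w).filter (onPair x y) =
      ((w i).filter (onPair ⟨x, hx⟩ ⟨y, hy⟩)).map Subtype.val := by
  rw [filter_onPair_substFibers, hx, hy,
    hq.1.filter_onPair_eq_singleton (hq.2 i) fun _ => rfl, List.flatMap_singleton, List.filter_map]
  congr 2
  funext z
  simp [onPair, Subtype.ext_iff]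

theorem filter_onPair_substFibers_of_ne (hw : ∀ i, IsPermOn (w i)) {x y : V} (hxy : f x ≠ f y) :
    (substFibers f q w).filter (onPair x y) =
      (q.filter (onPair (f x) (f y))).map fun i => if i = f x then x else y := by
  have block : ∀ {a b : V}, f a ≠ f b →
      ((w (f a)).map Subtype.val).filter (onPair a b) = [a] := fun {a b} hab =>
    ((hw _).1.map Subtype.val_injective).filter_onPair_eq_singleton
      ((hw _).mem_map_subtypeVal.2 rfl) fun hb => absurd ((hw _).mem_map_subtypeVal.1 hb) hab.symm
  rw [filter_onPair_substFibers, List.map_eq_flatMap]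
  refine List.flatMap_congr fun i hi => ?_
  have : i = f x ∨ i = f y := by simpa [onPair] using (List.mem_filter.1 hi).2
  rcases this with rfl | rfl
  · rw [if_pos rfl, block hxy]
  · rw [if_neg hxy.symm, onPair_comm, block hxy.symm]

theorem IsPermRepresentation.of_fibers {G : SimpleGraph V} {Q : SimpleGraph ι}
    (hQ : ∀ x y, f x ≠ f y → (G.Adj x y ↔ Q.Adj (f x) (f y))) {N : ℕ} {qs : Fin N → List ι}
    (hq : IsPermRepresentation Q qs) {ws : ∀ i, Fin N → List (f ⁻¹' {i})}
    (hw : ∀ i, IsPermRepresentation (G.induce (f ⁻¹' {i})) (ws i)) :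
    IsPermRepresentation G fun t => substFibers f (qs t) fun i => ws i t := by
  have hperm : ∀ t, IsPermOn (substFibers f (qs t) fun i => ws i t) :=
    fun t => (hq.1 t).substFibers fun i => (hw i).1 t
  refine ⟨hperm, fun v => ?_, fun x y hxy => ?_⟩
  · obtain ⟨t, -⟩ := hq.2.1 (f v)
    exact ⟨t, (hperm t).2 v⟩
  by_cases hfxy : f x = f y
  · have hx'y' : (⟨x, rfl⟩ : f ⁻¹' {f x}) ≠ ⟨y, hfxy.symm⟩ := by simpa [Subtype.ext_iff] using hxy
    simp only [filter_onPair_substFibers_of_eq (hq.1 _) rfl hfxy.symm,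
      (List.map_injective_iff.2 Subtype.val_injective).eq_iff]
    exact (hw (f x)).2.2 _ _ hx'y'
  · rw [hQ x y hfxy, hq.2.2 _ _ hfxy]
    simp only [filter_onPair_substFibers_of_ne (fun i => (hw i).1 _) hfxy]
    refine forall₂_congr fun s t => ?_
    rcases (hq.1 s).filter_onPair hfxy with hs | hs <;>
      rcases (hq.1 t).filter_onPair hfxy with ht | ht <;>
      simp [hs, ht, hxy, hxy.symm, hfxy, Ne.symm hfxy]

theorem PermRepresents.of_fibers {G : SimpleGraph V} {Q : SimpleGraph ι}
    (hQ : ∀ x y, f x ≠ f y → (G.Adj x y ↔ Q.Adj (f x) (f y))) {N : ℕ}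
    (hq : PermRepresents Q N) (hw : ∀ i, PermRepresents (G.induce (f ⁻¹' {i})) N) :
    PermRepresents G N := by
  obtain ⟨qs, hqs⟩ := permRepresents_iff.1 hq
  choose ws hws using fun i => permRepresents_iff.1 (hw i)
  exact permRepresents_iff.2 ⟨_, hqs.of_fibers hQ hws⟩

end Substitution

section Quotient
variable {V : Type*} {G : SimpleGraph V} {n : ℕ} {Mod : Fin n → Set V}

theorem quotientGraph_adj_iff_of_mem (hdisj : ∀ i j, i ≠ j → Disjoint (Mod i) (Mod j))
    (hmod : ∀ i, IsModule G (Mod i)) {i j : Fin n} (hij : i ≠ j) {a b : V} (ha : a ∈ Mod i)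
    (hb : b ∈ Mod j) : (quotientGraph G Mod).Adj i j ↔ G.Adj a b := by
  refine ⟨fun h => h.2 a ha b hb, fun hab => ⟨hij, fun a' ha' b' hb' => ?_⟩⟩
  have hab' : G.Adj a b' := by
    rcases hmod j a (Set.disjoint_left.1 (hdisj i j hij) ha) with h | h
    exacts [h b' hb', absurd hab (h b hb)]
  rcases hmod i b' (Set.disjoint_right.1 (hdisj i j hij) hb') with h | h
  exacts [(h a' ha').symm, absurd hab'.symm (h a ha)]

noncomputable def quotientGraphEmbedding (hne : ∀ i, (Mod i).Nonempty)
    (hdisj : ∀ i j, i ≠ j → Disjoint (Mod i) (Mod j)) (hmod : ∀ i, IsModule G (Mod i)) :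
    quotientGraph G Mod ↪g G where
  toFun i := (hne i).some
  inj' i j h := by_contra fun hij => Set.disjoint_left.1 (hdisj i j hij) (hne i).some_mem
    (by simpa only [h] using (hne j).some_mem)
  map_rel_iff' {i j} := by
    by_cases hij : i = j
    · subst hij
      simp
    · exact (quotientGraph_adj_iff_of_mem hdisj hmod hij (hne i).some_mem (hne j).some_mem).symm

end Quotient

theorem stmt18_general {V : Type*} [DecidableEq V] (G : SimpleGraph V)
    {n : ℕ} (Mod : Fin n → Set V)
    (hne : ∀ i, (Mod i).Nonempty)
    (hdisj : ∀ i j, i ≠ j → Disjoint (Mod i) (Mod j))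
    (hcov : ∀ v : V, ∃ i, v ∈ Mod i)
    (hmod : ∀ i, IsModule G (Mod i))
    (k₀ : ℕ) (ks : Fin n → ℕ)
    (hq : PrnIs (quotientGraph G Mod) k₀)
    (hp : ∀ i, PrnIs (G.induce (Mod i)) (ks i)) :
    PrnIs G (max k₀ (Finset.univ.sup ks)) := by
  choose f hf using hcov
  have hfiber : ∀ i, Mod i = f ⁻¹' {i} := fun i => Set.ext fun v =>
    ⟨fun hv => by_contra fun h => Set.disjoint_left.1 (hdisj _ _ h) (hf v) hv, fun h => h ▸ hf v⟩
  refine ⟨PermRepresents.of_fibers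
    (fun x y hxy => (quotientGraph_adj_iff_of_mem hdisj hmod hxy (hf x) (hf y)).symm)
    (hq.1.mono (le_max_left _ _)) fun i => ?_, fun m hm => max_le ?_ ?_⟩
  · rw [← hfiber i]
    exact (hp i).1.mono ((Finset.le_sup (Finset.mem_univ i)).trans (le_max_right _ _))
  · exact hq.2 (hm.comap (quotientGraphEmbedding hne hdisj hmod))
  · exact Finset.sup_le fun i _ => (hp i).2 (hm.comap (SimpleGraph.Embedding.induce _))

/-- for a comparability graph with modular partition `{M₁, …, Mₙ}`,
`R^p(G) = max {R^p(G/P), R^p(G[M₁]), …, R^p(G[Mₙ])}`. -/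
theorem stmt18 {V : Type*} [DecidableEq V] [Fintype V] (G : SimpleGraph V)
    (hcomp : IsComparability G) {n : ℕ} (Mod : Fin n → Set V)
    (hne : ∀ i, (Mod i).Nonempty)
    (hdisj : ∀ i j, i ≠ j → Disjoint (Mod i) (Mod j))
    (hcov : ∀ v : V, ∃ i, v ∈ Mod i)
    (hmod : ∀ i, IsModule G (Mod i))
    (k₀ : ℕ) (ks : Fin n → ℕ)
    (hq : PrnIs (quotientGraph G Mod) k₀)
    (hp : ∀ i, PrnIs (G.induce (Mod i)) (ks i)) :
    PrnIs G (max k₀ (Finset.univ.sup ks)) :=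
  stmt18_general G Mod hne hdisj hcov hmod k₀ ks hq hp
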